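/- arXiv:1901.01637 — 6 statements merged into one kernel-verified Lean document; each statement's English description precedes it below -/
import Mathlib

section
/- Let n ≥ 1 and let f : {0,1}^n → {0,1} be any Boolean function. Define g : {0,1}^{n+1} → {0,1} by g(x, x_{n+1}) = (x_{n+1} ∧ ¬f(x)) ∨ (¬x_{n+1} ∧ (x_1 ∧ x_2 ∧ ⋯ ∧ x_n)) for x ∈ {0,1}^n and x_{n+1} ∈ {0,1}. Then gap(g) = 2^n − 2 + Σ_{x∈{0,1}^n} (−1)^{1−f(x)}. Consequently, if #f = 0 then gap(g) ≠ 0, and if #f = 1 then gap(g) = 0. -/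
open scoped BigOperators

noncomputable section

/-- The classical states of `m` qubits: bit strings of length `m`. -/
abbrev Qubits (m : ℕ) := Fin m → Bool

/-- `gap f = Σ_x (-1)^{f(x)}`. -/
def gap {α : Type*} [Fintype α] (f : α → Bool) : ℤ := ∑ x, if f x then -1 else 1

/-- `#f`, the number of inputs on which `f` outputs `1`. -/
def countOnes {α : Type*} [Fintype α] (f : α → Bool) : ℕ :=
  Finset.card (Finset.univ.filter fun x => f x = true)

lemma sum_pm {α : Type*} [Fintype α] (f : α → Bool) :
    ∑ x, (if f x then (-1 : ℤ) else 1) =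
      (Fintype.card α : ℤ) - 2 * countOnes f := by
  have h : ∀ x, (if f x then (-1 : ℤ) else 1)
      = 1 - 2 * (if f x then (1 : ℤ) else 0) := by
    intro x; by_cases h : f x <;> simp [h]
  rw [Finset.sum_congr rfl fun x _ => h x, Finset.sum_sub_distrib,
    ← Finset.mul_sum, Finset.sum_boole]
  simp only [countOnes]
  push_cast
  rw [Finset.sum_const, Finset.card_univ, nsmul_eq_mul, mul_one]

lemma sum_pm' {α : Type*} [Fintype α] (f : α → Bool) :
    ∑ x, (if f x then (1 : ℤ) else -1) =
      2 * countOnes f - (Fintype.card α : ℤ) := by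
  have := sum_pm f
  have h2 : ∑ x, (if f x then (1 : ℤ) else -1)
      = - ∑ x, (if f x then (-1 : ℤ) else 1) := by
    rw [← Finset.sum_neg_distrib]
    refine Finset.sum_congr rfl fun x _ => ?_
    by_cases h : f x <;> simp [h]
  rw [h2, this]; ring

/-- for `g(x, x_{n+1}) = (x_{n+1} ∧ ¬f(x)) ∨ (¬x_{n+1} ∧ (x_1 ∧ ⋯ ∧ x_n))`,
one has `gap(g) = 2^n − 2 + Σ_x (−1)^{1−f(x)}`; hence if `#f = 0` then `gap(g) ≠ 0`
and if `#f = 1` then `gap(g) = 0`. -/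
theorem gap_of_unique_sat_reduction (n : ℕ) (hn : 1 ≤ n) (f : Qubits n → Bool)
    (g : Qubits n × Bool → Bool)
    (hg : ∀ (x : Qubits n) (b : Bool),
      g (x, b) = ((b && !(f x)) || (!b && decide (∀ j, x j = true)))) :
    gap g = 2 ^ n - 2 + (∑ x : Qubits n, if f x then (1 : ℤ) else -1) ∧
      (countOnes f = 0 → gap g ≠ 0) ∧
      (countOnes f = 1 → gap g = 0) := by
  have hcard : (Fintype.card (Qubits n) : ℤ) = 2 ^ n := by
    simp [Qubits]
  have hA : countOnes (fun x : Qubits n => decide (∀ j, x j = true)) = 1 := by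
    have h : (Finset.univ.filter fun x : Qubits n =>
        (∀ j, x j = true)) = {fun _ => true} := by
      ext x
      simp [funext_iff]
    simp [countOnes, h]
  have hmain : gap g = 2 ^ n - 2 + (∑ x : Qubits n, if f x then (1 : ℤ) else -1) := by
    have : gap g = ∑ x : Qubits n,
        ((if g (x, true) then (-1 : ℤ) else 1) + (if g (x, false) then (-1 : ℤ) else 1)) := by
      rw [gap, Fintype.sum_prod_type]
      refine Finset.sum_congr rfl fun x _ => ?_
      rw [Fintype.sum_bool]
    rw [this, Finset.sum_add_distrib]
    have h1 : ∑ x : Qubits n, (if g (x, true) then (-1 : ℤ) else 1)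
        = ∑ x : Qubits n, (if f x then (1 : ℤ) else -1) := by
      refine Finset.sum_congr rfl fun x _ => ?_
      rw [hg]
      by_cases h : f x <;> simp [h]
    have h2 : ∑ x : Qubits n, (if g (x, false) then (-1 : ℤ) else 1)
        = (2 : ℤ) ^ n - 2 := by
      have : ∑ x : Qubits n, (if g (x, false) then (-1 : ℤ) else 1)
          = ∑ x : Qubits n, (if (fun x : Qubits n => decide (∀ j, x j = true)) x
              then (-1 : ℤ) else 1) := by
        refine Finset.sum_congr rfl fun x _ => ?_
        rw [hg]; simp
      rw [this, sum_pm, hA, hcard]; ring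
    rw [h1, h2]; ring
  refine ⟨hmain, ?_, ?_⟩
  · intro h0
    rw [hmain, sum_pm', h0, hcard]
    intro hcontra
    push_cast at hcontra
    linarith
  · intro h1
    rw [hmain, sum_pm', h1, hcard]
    ring
end
end

section
/- Let n ≥ 0, ξ ≥ 1, let f : {0,1}^n → {0,1} and junk : {0,1}^n → {0,1}^{n+ξ−1} be functions, and let U be a unitary operator on the state space of n+ξ qubits satisfying U(|x⟩ ⊗ |0^ξ⟩) = |junk(x)⟩ ⊗ |f(x)⟩ for every x ∈ {0,1}^n. Define V := H^{⊗(n+ξ)} (I^{⊗(n+ξ−1)} ⊗ Z) U (H^{⊗n} ⊗ I^{⊗ξ}). Then |⟨0^{n+ξ}| V |0^{n+ξ}⟩|² = gap(f)² / 2^{2n+ξ}. -/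
open scoped BigOperators

noncomputable section

/-- The standard basis vector `|v⟩` of the `m`-qubit state space. -/
def ket {m : ℕ} (v : Qubits m) : Qubits m → ℂ := fun y => if y = v then 1 else 0

/-- Tensor product of operators, w.r.t. the identification
`{0,1}^a × {0,1}^b ≅ {0,1}^(a+b)`. -/
def tmul {a b : ℕ} (A : Matrix (Qubits a) (Qubits a) ℂ)
    (B : Matrix (Qubits b) (Qubits b) ℂ) :
    Matrix (Qubits (a + b)) (Qubits (a + b)) ℂ :=
  Matrix.of fun y y' =>
    A (fun i => y (Fin.castAdd b i)) (fun i => y' (Fin.castAdd b i)) *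
      B (fun i => y (Fin.natAdd a i)) (fun i => y' (Fin.natAdd a i))

/-- `n`-fold tensor power `M^{⊗n}` of a single-qubit operator. -/
def tpow (M : Matrix Bool Bool ℂ) (n : ℕ) : Matrix (Qubits n) (Qubits n) ℂ :=
  Matrix.of fun y y' => ∏ i, M (y i) (y' i)

/-- The Hadamard gate. -/
def Hmat : Matrix Bool Bool ℂ :=
  Matrix.of fun a b => ((1 / Real.sqrt 2 : ℝ) : ℂ) * (if a && b then -1 else 1)

/-- The Pauli `Z` gate. -/
def Zmat : Matrix Bool Bool ℂ :=
  Matrix.of fun a b => if a = b then (if a then -1 else 1) else 0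

/-- The Pauli `X` gate. -/
def Xmat : Matrix Bool Bool ℂ :=
  Matrix.of fun a b => if a = !b then 1 else 0

/-- Transport a matrix along an equality of qubit numbers. -/
def recast {a b : ℕ} (h : a = b) (M : Matrix (Qubits a) (Qubits a) ℂ) :
    Matrix (Qubits b) (Qubits b) ℂ :=
  Matrix.reindex (Equiv.arrowCongr (finCongr h) (Equiv.refl Bool))
    (Equiv.arrowCongr (finCongr h) (Equiv.refl Bool)) M

/-- Transport a bit string along an equality of lengths. -/
def vcast {a b : ℕ} (h : a = b) (x : Qubits a) : Qubits b := fun i => x (Fin.cast h.symm i)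

-- ======================= auxiliary lemmas =======================

/-- Splitting a bit string of length `a+b` into its two halves. -/
def appEquiv (a b : ℕ) : (Qubits a × Qubits b) ≃ Qubits (a + b) where
  toFun p := Fin.append p.1 p.2
  invFun c := (fun i => c (Fin.castAdd b i), fun i => c (Fin.natAdd a i))
  left_inv p := by
    refine Prod.ext (funext fun i => ?_) (funext fun i => ?_) <;> simp
  right_inv c := by
    funext i
    induction i using Fin.addCases with
    | left i => simp
    | right i => simp

lemma hrow (m : ℕ) (y : Qubits m) :
    tpow Hmat m (fun _ => false) y = ((1 / Real.sqrt 2 : ℝ) : ℂ) ^ m := by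
  simp [tpow, Hmat]

lemma hcol (m : ℕ) (y : Qubits m) :
    tpow Hmat m y (fun _ => false) = ((1 / Real.sqrt 2 : ℝ) : ℂ) ^ m := by
  simp [tpow, Hmat]

lemma id_apply' {m : ℕ} (p q : Qubits m) : tpow 1 m p q = if p = q then 1 else 0 := by
  by_cases h : p = q
  · subst h; simp [tpow, Matrix.one_apply]
  · obtain ⟨i, hi⟩ : ∃ i, p i ≠ q i := by
      by_contra hc; push_neg at hc; exact h (funext hc)
    rw [if_neg h]
    exact Finset.prod_eq_zero (Finset.mem_univ i) (by simp [Matrix.one_apply, hi])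

lemma zpow_apply (u v : Qubits 1) : tpow Zmat 1 u v = Zmat (u 0) (v 0) := by
  simp [tpow]

lemma zcol (b : Bool) : ∑ u : Qubits 1, Zmat (u 0) b = if b then -1 else 1 := by
  rw [← Equiv.sum_comp (Equiv.funUnique (Fin 1) Bool).symm
      (fun u : Qubits 1 => Zmat (u 0) b)]
  cases b <;> simp [Zmat, Fintype.sum_bool, Equiv.funUnique]

lemma entry_eq (n ξ : ℕ) (h1 : (n + ξ - 1) + 1 = n + ξ)
    (f : Qubits n → Bool) (junk : Qubits n → Qubits (n + ξ - 1))
    (U : Matrix (Qubits (n + ξ)) (Qubits (n + ξ)) ℂ)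
    (hact : ∀ x : Qubits n,
      U.mulVec (ket (Fin.append x fun _ : Fin ξ => false)) =
        ket (vcast h1 (Fin.snoc (junk x) (f x)))) :
    (tpow Hmat (n + ξ) * recast h1 (tmul (tpow 1 (n + ξ - 1)) (tpow Zmat 1)) *
        U * tmul (tpow Hmat n) (tpow 1 ξ)) (fun _ => false) (fun _ => false) =
      ((1 / Real.sqrt 2 : ℝ) : ℂ) ^ (2 * n + ξ) * ((gap f : ℤ) : ℂ) := by
  set κ : ℂ := ((1 / Real.sqrt 2 : ℝ) : ℂ) with hκ
  set L : Fin (n + ξ) := Fin.cast h1 (Fin.natAdd (n + ξ - 1) (0 : Fin 1)) with hL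
  -- the row `⟨0| H^{⊗(n+ξ)} (I ⊗ Z)`
  have hADrow : ∀ w : Qubits (n + ξ),
      (tpow Hmat (n + ξ) * recast h1 (tmul (tpow 1 (n + ξ - 1)) (tpow Zmat 1)))
        (fun _ => false) w = κ ^ (n + ξ) * (if w L then -1 else 1) := by
    intro w
    rw [Matrix.mul_apply]
    simp_rw [hrow]
    rw [← Finset.mul_sum]
    congr 1
    rw [← Equiv.sum_comp (Equiv.arrowCongr (finCongr h1) (Equiv.refl Bool))
        (fun z => recast h1 (tmul (tpow 1 (n + ξ - 1)) (tpow Zmat 1)) z w)]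
    simp only [recast, Matrix.reindex_apply, Matrix.submatrix_apply,
      Equiv.symm_apply_apply]
    rw [← Equiv.sum_comp (appEquiv (n + ξ - 1) 1)]
    rw [Fintype.sum_prod_type]
    have hsymm : ((Equiv.arrowCongr (finCongr h1) (Equiv.refl Bool)).symm w)
        = fun j => w (Fin.cast h1 j) := rfl
    have key : ∀ (p : Qubits (n + ξ - 1)) (u : Qubits 1),
        tmul (tpow 1 (n + ξ - 1)) (tpow Zmat 1)
          (appEquiv (n + ξ - 1) 1 (p, u))
          ((Equiv.arrowCongr (finCongr h1) (Equiv.refl Bool)).symm w)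
        = (if p = (fun i => w (Fin.cast h1 (Fin.castAdd 1 i))) then 1 else 0) *
            Zmat (u 0) (w L) := by
      intro p u
      have e1 : (appEquiv (n + ξ - 1) 1 (p, u)) = Fin.append p u := rfl
      rw [e1, hsymm]
      simp only [tmul, Matrix.of_apply, Fin.append_left, Fin.append_right,
        id_apply', zpow_apply]
      rfl
    simp_rw [key]
    rw [← Finset.sum_mul_sum]
    rw [zcol]
    simp [Finset.sum_ite_eq']
  -- the columns of `U` on classical inputs
  have hUcol : ∀ (x : Qubits n) (w : Qubits (n + ξ)),
      U w (Fin.append x fun _ => false) =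
        ket (vcast h1 (Fin.snoc (junk x) (f x))) w := by
    intro x w
    have := congrFun (hact x) w
    simpa [Matrix.mulVec, dotProduct, ket, mul_ite, mul_one, mul_zero,
      Finset.sum_ite_eq'] using this
  have htL : ∀ x : Qubits n,
      vcast h1 (Fin.snoc (junk x) (f x)) L = f x := by
    intro x
    unfold vcast
    have e : Fin.cast h1.symm (Fin.cast h1 (Fin.natAdd (n + ξ - 1) (0 : Fin 1)))
        = Fin.last (n + ξ - 1) := by ext; simp
    rw [hL, e, Fin.snoc_last]
  have hADU : ∀ x : Qubits n,
      (tpow Hmat (n + ξ) * recast h1 (tmul (tpow 1 (n + ξ - 1)) (tpow Zmat 1)) * U)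
        (fun _ => false) (Fin.append x fun _ => false)
      = κ ^ (n + ξ) * (if f x then -1 else 1) := by
    intro x
    rw [Matrix.mul_apply]
    simp_rw [hADrow, hUcol]
    simp only [ket, mul_ite, mul_one, mul_zero]
    rw [Finset.sum_ite_eq' Finset.univ (vcast h1 (Fin.snoc (junk x) (f x)))]
    simp [htL x]
  -- put everything together
  rw [Matrix.mul_apply]
  rw [← Equiv.sum_comp (appEquiv n ξ)]
  rw [Fintype.sum_prod_type]
  have key2 : ∀ (x : Qubits n) (u : Qubits ξ),
      (tpow Hmat (n + ξ) * recast h1 (tmul (tpow 1 (n + ξ - 1)) (tpow Zmat 1)) * U)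
          (fun _ => false) (appEquiv n ξ (x, u)) *
        tmul (tpow Hmat n) (tpow 1 ξ) (appEquiv n ξ (x, u)) (fun _ => false)
      = (if u = (fun _ => false) then 1 else 0) *
          (κ ^ (n + ξ) * (if f x then -1 else 1) * κ ^ n) := by
    intro x u
    have e2 : appEquiv n ξ (x, u) = Fin.append x u := rfl
    rw [e2]
    have e3 : tmul (tpow Hmat n) (tpow 1 ξ) (Fin.append x u) (fun _ => false)
        = κ ^ n * (if u = (fun _ => false) then 1 else 0) := by
      simp only [tmul, Matrix.of_apply]
      have e4 : (fun i => Fin.append x u (Fin.castAdd ξ i)) = x := by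
        funext i; simp
      have e5 : (fun i => Fin.append x u (Fin.natAdd n i)) = u := by
        funext i; simp
      rw [e4, e5, hcol, id_apply']
    rw [e3]
    by_cases hu : u = (fun _ => false)
    · subst hu
      rw [hADU x]
      ring
    · simp [hu]
  simp_rw [key2, ← Finset.sum_mul]
  simp only [Finset.sum_ite_eq', Finset.mem_univ, if_true, one_mul]
  have hgap : ((gap f : ℤ) : ℂ) = ∑ x, (if f x then (-1 : ℂ) else 1) := by
    simp [gap, apply_ite (Int.cast : ℤ → ℂ)]
  rw [hgap, Finset.mul_sum]
  refine Finset.sum_congr rfl fun x _ => ?_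
  rw [show 2 * n + ξ = (n + ξ) + n by ring, pow_add]
  ring

/-- if the unitary `U` on `n+ξ` qubits satisfies
`U(|x⟩⊗|0^ξ⟩) = |junk(x)⟩⊗|f(x)⟩`, and
`V := H^{⊗(n+ξ)} (I^{⊗(n+ξ−1)} ⊗ Z) U (H^{⊗n} ⊗ I^{⊗ξ})`, then
`|⟨0^{n+ξ}|V|0^{n+ξ}⟩|² = gap(f)² / 2^{2n+ξ}`. -/
theorem dqc1_gap_amplitude (n ξ : ℕ) (hξ : 1 ≤ ξ)
    (f : Qubits n → Bool) (junk : Qubits n → Qubits (n + ξ - 1))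
    (U : Matrix (Qubits (n + ξ)) (Qubits (n + ξ)) ℂ)
    (hU : U ∈ Matrix.unitaryGroup (Qubits (n + ξ)) ℂ)
    (hact : ∀ x : Qubits n,
      U.mulVec (ket (Fin.append x fun _ : Fin ξ => false)) =
        ket (vcast (show (n + ξ - 1) + 1 = n + ξ by omega) (Fin.snoc (junk x) (f x)))) :
    ‖
        ((tpow Hmat (n + ξ) *
            recast (show (n + ξ - 1) + 1 = n + ξ by omega)
              (tmul (tpow 1 (n + ξ - 1)) (tpow Zmat 1)) *
            U * tmul (tpow Hmat n) (tpow 1 ξ))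
          (fun _ => false) (fun _ => false))‖ ^ 2 =
      (gap f : ℝ) ^ 2 / 2 ^ (2 * n + ξ) := by
  rw [entry_eq n ξ (show (n + ξ - 1) + 1 = n + ξ by omega) f junk U hact]
  have hr : (0 : ℝ) ≤ 1 / Real.sqrt 2 := by positivity
  rw [norm_mul, norm_pow, Complex.norm_real, Real.norm_of_nonneg hr, Complex.norm_intCast]
  rw [mul_pow, ← pow_mul, mul_comm (2 * n + ξ) 2, pow_mul, sq_abs]
  have h2 : (1 / Real.sqrt 2 : ℝ) ^ 2 = 1 / 2 := by
    rw [div_pow, one_pow, Real.sq_sqrt] <;> norm_num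
  rw [h2, div_pow, one_pow]
  ring
end
end

section
/- Let n ≥ 0, let f : {0,1}^n → {0,1} and g : {0,1}^n → ℝ be functions, and let U be a unitary operator on the state space of n+1 qubits satisfying U(|x⟩ ⊗ |b⟩) = e^{i g(x)} |x⟩ ⊗ |f(x) ⊕ b⟩ for every x ∈ {0,1}^n and b ∈ {0,1}, where ⊕ is addition mod 2. Define V := (H^{⊗n} ⊗ I) U† (I^{⊗n} ⊗ Z) U H^{⊗(n+1)}. Then |⟨0^{n+1}| V |0^{n+1}⟩|² = gap(f)² / 2^{2n+1}. -/
open scoped BigOperators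

noncomputable section

namespace PhaseOracleAux

lemma mulVec_ket {m : ℕ} (A : Matrix (Qubits m) (Qubits m) ℂ) (v : Qubits m) :
    A.mulVec (ket v) = fun u => A u v := by
  funext u
  simp [Matrix.mulVec, dotProduct, ket, mul_ite]

def snocEquiv (n : ℕ) : Qubits n × Bool ≃ Qubits (n+1) where
  toFun p := Fin.snoc p.1 p.2
  invFun v := (Fin.init v, v (Fin.last n))
  left_inv p := by simp
  right_inv v := by simp

lemma natAdd_zero_last (n : ℕ) : (Fin.natAdd n (0 : Fin 1)) = Fin.last n := by
  ext; simp

lemma qsplit {n : ℕ} (u v : Qubits (n+1))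
    (h1 : ∀ i : Fin n, u (Fin.castAdd 1 i) = v (Fin.castAdd 1 i))
    (h2 : u (Fin.natAdd n 0) = v (Fin.natAdd n 0)) : u = v := by
  funext j
  induction j using Fin.lastCases with
  | last => rw [← natAdd_zero_last]; exact h2
  | cast i => exact h1 i

lemma tpow_one_apply {m : ℕ} (y y' : Qubits m) :
    tpow (1 : Matrix Bool Bool ℂ) m y y' = if y = y' then 1 else 0 := by
  unfold tpow
  rw [Matrix.of_apply]
  simp only [Matrix.one_apply]
  rw [Finset.prod_boole]
  simp [funext_iff]

lemma Zbig_apply {n : ℕ} (u v : Qubits (n+1)) :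
    tmul (tpow 1 n) (tpow Zmat 1) u v
      = if u = v then (if v (Fin.last n) then (-1 : ℂ) else 1) else 0 := by
  unfold tmul
  rw [Matrix.of_apply, tpow_one_apply]
  have h1 : tpow Zmat 1 (fun i => u (Fin.natAdd n i)) (fun i => v (Fin.natAdd n i))
      = Zmat (u (Fin.natAdd n 0)) (v (Fin.natAdd n 0)) := by
    unfold tpow; rw [Matrix.of_apply, Fin.prod_univ_one]
  rw [h1]
  by_cases h : u = v
  · subst h
    simp [Zmat, natAdd_zero_last]
  · have hne : ¬((∀ i : Fin n, u (Fin.castAdd 1 i) = v (Fin.castAdd 1 i)) ∧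
        u (Fin.natAdd n 0) = v (Fin.natAdd n 0)) := by
      intro hh; exact h (qsplit u v hh.1 hh.2)
    rcases not_and_or.mp hne with hh | hh
    · rw [if_neg h, if_neg (by simpa [funext_iff] using hh), zero_mul]
    · rw [if_neg h, Zmat, Matrix.of_apply, if_neg hh, mul_zero]

end PhaseOracleAux

/-- if the unitary `U` on `n+1` qubits satisfies
`U(|x⟩⊗|b⟩) = e^{i g(x)} |x⟩⊗|f(x)⊕b⟩`, and
`V := (H^{⊗n} ⊗ I) U† (I^{⊗n} ⊗ Z) U H^{⊗(n+1)}`, then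
`|⟨0^{n+1}|V|0^{n+1}⟩|² = gap(f)² / 2^{2n+1}`. -/
theorem phase_oracle_gap_amplitude (n : ℕ)
    (f : Qubits n → Bool) (g : Qubits n → ℝ)
    (U : Matrix (Qubits (n + 1)) (Qubits (n + 1)) ℂ)
    (hU : U ∈ Matrix.unitaryGroup (Qubits (n + 1)) ℂ)
    (hact : ∀ (x : Qubits n) (b : Bool),
      U.mulVec (ket (Fin.snoc x b)) =
        Complex.exp (Complex.I * (g x : ℝ)) • ket (Fin.snoc x (xor (f x) b))) :
    ‖(tmul (tpow Hmat n) (tpow 1 1) * U.conjTranspose * tmul (tpow 1 n) (tpow Zmat 1) * U *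
            tpow Hmat (n + 1))
          (fun _ => false) (fun _ => false)‖ ^ 2 =
      (gap f : ℝ) ^ 2 / 2 ^ (2 * n + 1) := by
  classical
  open PhaseOracleAux in
  have hUU : U.conjTranspose * U = 1 := by
    have h := hU.1; rwa [Matrix.star_eq_conjTranspose] at h
  have hexp : ∀ x : Qubits n, Complex.exp (Complex.I * (g x : ℝ)) ≠ 0 :=
    fun x => Complex.exp_ne_zero _
  have hUdag : ∀ (x : Qubits n) (c : Bool),
      (U.conjTranspose).mulVec (ket (Fin.snoc x c))
        = (Complex.exp (Complex.I * (g x : ℝ)))⁻¹ • ket (Fin.snoc x (xor (f x) c)) := by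
    intro x c
    have h1 := hact x (xor (f x) c)
    have h2 : xor (f x) (xor (f x) c) = c := by cases f x <;> cases c <;> rfl
    rw [h2] at h1
    have h3 : (U.conjTranspose).mulVec (U.mulVec (ket (Fin.snoc x (xor (f x) c))))
        = ket (Fin.snoc x (xor (f x) c)) := by
      rw [Matrix.mulVec_mulVec, hUU, Matrix.one_mulVec]
    rw [h1, Matrix.mulVec_smul] at h3
    rw [← h3, smul_smul, inv_mul_cancel₀ (hexp x), one_smul]
  have hZcol : ∀ v : Qubits (n+1),
      (tmul (tpow 1 n) (tpow Zmat 1)).mulVec (ket v)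
        = (if v (Fin.last n) then (-1:ℂ) else 1) • ket v := by
    intro v
    rw [mulVec_ket]
    funext u
    rw [Zbig_apply]
    by_cases h : u = v <;> simp [h, ket]
  have hDcol : ∀ (x : Qubits n) (b : Bool),
      (U.conjTranspose * tmul (tpow 1 n) (tpow Zmat 1) * U).mulVec (ket (Fin.snoc x b))
        = (if xor (f x) b then (-1:ℂ) else 1) • ket (Fin.snoc x b) := by
    intro x b
    have h2 : xor (f x) (xor (f x) b) = b := by cases f x <;> cases b <;> rfl
    rw [← Matrix.mulVec_mulVec, ← Matrix.mulVec_mulVec, hact x b, Matrix.mulVec_smul,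
      Matrix.mulVec_smul, hZcol, Fin.snoc_last, Matrix.mulVec_smul, hUdag, h2,
      smul_smul, smul_smul, mul_right_comm, mul_inv_cancel₀ (hexp x), one_mul]
  have hDentry : ∀ (u v : Qubits (n+1)),
      (U.conjTranspose * tmul (tpow 1 n) (tpow Zmat 1) * U) u v
        = if u = v then (if xor (f (Fin.init v)) (v (Fin.last n)) then (-1:ℂ) else 1)
          else 0 := by
    intro u v
    have h := hDcol (Fin.init v) (v (Fin.last n))
    rw [Fin.snoc_init_self, mulVec_ket] at h
    have h2 := congrFun h u
    simp only [Pi.smul_apply, ket, smul_eq_mul] at h2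
    rw [h2]
    by_cases h : u = v <;> simp [h]
  set z : Qubits (n+1) := (fun _ => false) with hz
  set c : ℂ := ((1 / Real.sqrt 2 : ℝ) : ℂ) with hc
  have hassoc : tmul (tpow Hmat n) (tpow 1 1) * U.conjTranspose * tmul (tpow 1 n) (tpow Zmat 1)
      * U * tpow Hmat (n + 1)
      = tmul (tpow Hmat n) (tpow 1 1)
        * (U.conjTranspose * tmul (tpow 1 n) (tpow Zmat 1) * U) * tpow Hmat (n+1) := by
    simp only [mul_assoc]
  have h1 : ∀ v : Qubits (n+1),
      (tmul (tpow Hmat n) (tpow 1 1)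
        * (U.conjTranspose * tmul (tpow 1 n) (tpow Zmat 1) * U)) z v
      = tmul (tpow Hmat n) (tpow 1 1) z v
        * (if xor (f (Fin.init v)) (v (Fin.last n)) then (-1:ℂ) else 1) := by
    intro v
    rw [Matrix.mul_apply, Finset.sum_eq_single v]
    · rw [hDentry, if_pos rfl]
    · intro u _ hu
      rw [hDentry, if_neg hu, mul_zero]
    · intro h; exact absurd (Finset.mem_univ v) h
  have hA : ∀ (x : Qubits n) (b : Bool),
      tmul (tpow Hmat n) (tpow 1 1) z (Fin.snoc x b)
        = c ^ n * (if b = false then 1 else 0) := by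
    intro x b
    unfold tmul tpow
    rw [Matrix.of_apply, Matrix.of_apply, Matrix.of_apply]
    have hfst : ∀ i : Fin n,
        Hmat (z (Fin.castAdd 1 i)) ((Fin.snoc x b : Qubits (n+1)) (Fin.castAdd 1 i)) = c := by
      intro i
      simp [Hmat, hz, hc]
    rw [Finset.prod_congr rfl (fun i _ => hfst i), Finset.prod_const, Finset.card_univ,
      Fintype.card_fin, Fin.prod_univ_one]
    have hsnd : ((Fin.snoc x b : Qubits (n+1)) (Fin.natAdd n (0 : Fin 1)) : Bool) = b := by
      rw [natAdd_zero_last]; simp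
    rw [Matrix.one_apply]
    simp only [hz, hsnd]
    by_cases hb : b = false <;> simp [hb]
  have hH : ∀ (x : Qubits n) (b : Bool),
      tpow Hmat (n+1) (Fin.snoc x b) z = c ^ (n+1) := by
    intro x b
    unfold tpow
    rw [Matrix.of_apply]
    have hmm : ∀ i : Fin (n+1), Hmat ((Fin.snoc x b : Qubits (n+1)) i) (z i) = c := by
      intro i; simp [Hmat, hz, hc]
    rw [Finset.prod_congr rfl (fun i _ => hmm i), Finset.prod_const, Finset.card_univ,
      Fintype.card_fin]
  have hgapcast : ((gap f : ℤ) : ℂ) = ∑ x : Qubits n, (if f x then (-1:ℂ) else 1) := by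
    unfold gap
    rw [Int.cast_sum]
    exact Finset.sum_congr rfl (fun x _ => by cases f x <;> simp)
  have hentry : (tmul (tpow Hmat n) (tpow 1 1)
      * (U.conjTranspose * tmul (tpow 1 n) (tpow Zmat 1) * U) * tpow Hmat (n+1)) z z
      = c ^ (2*n+1) * ((gap f : ℤ) : ℂ) := by
    rw [Matrix.mul_apply]
    have hswap := Fintype.sum_equiv (snocEquiv n)
      (fun p : Qubits n × Bool =>
        (tmul (tpow Hmat n) (tpow 1 1)
          * (U.conjTranspose * tmul (tpow 1 n) (tpow Zmat 1) * U)) z (snocEquiv n p)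
          * tpow Hmat (n+1) (snocEquiv n p) z)
      (fun v : Qubits (n+1) =>
        (tmul (tpow Hmat n) (tpow 1 1)
          * (U.conjTranspose * tmul (tpow 1 n) (tpow Zmat 1) * U)) z v
          * tpow Hmat (n+1) v z)
      (fun p => rfl)
    rw [← hswap, Fintype.sum_prod_type]
    have hterm : ∀ (x : Qubits n) (b : Bool),
        (tmul (tpow Hmat n) (tpow 1 1)
          * (U.conjTranspose * tmul (tpow 1 n) (tpow Zmat 1) * U)) z (snocEquiv n (x, b))
          * tpow Hmat (n+1) (snocEquiv n (x, b)) z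
        = if b = false then c ^ (2*n+1) * (if f x then (-1:ℂ) else 1) else 0 := by
      intro x b
      show (tmul (tpow Hmat n) (tpow 1 1)
          * (U.conjTranspose * tmul (tpow 1 n) (tpow Zmat 1) * U)) z (Fin.snoc x b)
          * tpow Hmat (n+1) (Fin.snoc x b) z = _
      rw [h1, hA, hH, Fin.init_snoc, Fin.snoc_last]
      cases b
      · norm_num [Bool.xor_false]
        have h2n : 2*n+1 = n + (n+1) := by omega
        rw [h2n, pow_add]
        ring
      · simp
    simp only [hterm]
    have hsb : ∀ x : Qubits n,
        (∑ b : Bool, if b = false then c ^ (2*n+1) * (if f x then (-1:ℂ) else 1) else 0)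
          = c ^ (2*n+1) * (if f x then (-1:ℂ) else 1) := by
      intro x; rw [Fintype.sum_bool]; simp
    rw [Finset.sum_congr rfl (fun x _ => hsb x), ← Finset.mul_sum, hgapcast]
  rw [hassoc, hentry]
  rw [norm_mul, norm_pow, mul_pow, ← pow_mul]
  have habsc : ‖c‖ = 1 / Real.sqrt 2 := by
    rw [hc, Complex.norm_real, Real.norm_eq_abs, abs_of_nonneg (by positivity)]
  have habsg : ‖((gap f : ℤ) : ℂ)‖ ^ 2 = (gap f : ℝ) ^ 2 := by
    rw [Complex.norm_intCast, sq_abs]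
  rw [habsc, habsg]
  have hhalf : (1 / Real.sqrt 2 : ℝ) ^ ((2*n+1) * 2) = 1 / 2 ^ (2*n+1) := by
    rw [mul_comm (2*n+1) 2, pow_mul]
    have hsq : (1 / Real.sqrt 2 : ℝ) ^ 2 = 1 / 2 := by
      rw [div_pow, one_pow, Real.sq_sqrt (by norm_num : (0:ℝ) ≤ 2)]
    rw [hsq, div_pow, one_pow]
  rw [hhalf]
  ring
end
end

section
/- Let n ≥ 0, ξ ≥ 0, let f : {0,1}^n → {0,1} be a function, and let V be a unitary operator on the state space of n+ξ+1 qubits satisfying V(|x⟩ ⊗ |0^ξ⟩ ⊗ |0⟩) = |x⟩ ⊗ |0^ξ⟩ ⊗ |f(x)⟩ for every x ∈ {0,1}^n. Define W := (H^{⊗n} ⊗ I^{⊗ξ} ⊗ H) V (H^{⊗n} ⊗ I^{⊗(ξ+1)}). Then |⟨0^{n+ξ}1| W |0^{n+ξ+1}⟩|² = gap(f)² / 2^{2n+1}, where |0^{n+ξ}1⟩ denotes the basis vector labeled by n+ξ zeros followed by a 1. -/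
open scoped BigOperators

noncomputable section

lemma tpow_one_eq (k : ℕ) (y y' : Qubits k) :
    tpow 1 k y y' = if y = y' then 1 else 0 := by
  simp only [tpow, Matrix.of_apply, Matrix.one_apply]
  rw [Finset.prod_boole]
  simp [funext_iff]

lemma Hmat_row_false (a : Bool) : Hmat a false = ((1 / Real.sqrt 2 : ℝ) : ℂ) := by
  simp [Hmat]

lemma Hmat_col_false (b : Bool) : Hmat false b = ((1 / Real.sqrt 2 : ℝ) : ℂ) := by
  simp [Hmat]

lemma Hmat_true (b : Bool) : Hmat true b = ((1 / Real.sqrt 2 : ℝ) : ℂ) * (if b then -1 else 1) := by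
  simp [Hmat]

def splitE (n ξ : ℕ) : (Qubits n × Qubits ξ × Bool) ≃ Qubits (n + ξ + 1) where
  toFun p := Fin.snoc (Fin.append p.1 p.2.1) p.2.2
  invFun z := (fun i => z (Fin.castSucc (Fin.castAdd ξ i)),
               fun i => z (Fin.castSucc (Fin.natAdd n i)),
               z (Fin.last (n+ξ)))
  left_inv p := by
    obtain ⟨x, u, b⟩ := p
    simp [Fin.snoc_castSucc, Fin.append_left, Fin.append_right, -Fin.castSucc_natAdd]
  right_inv z := by
    funext i
    refine Fin.lastCases ?_ ?_ i
    · simp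
    · intro j
      refine Fin.addCases (fun j' => ?_) (fun j' => ?_) j <;> simp [-Fin.castSucc_natAdd]

lemma snoc_eq_zero_iff {k : ℕ} (u : Qubits k) (b : Bool) :
    (Fin.snoc u b : Qubits (k+1)) = (fun _ => false) ↔ u = (fun _ => false) ∧ b = false := by
  constructor
  · intro h
    refine ⟨funext fun i => ?_, ?_⟩
    · have := congrFun h (Fin.castSucc i); simpa using this
    · have := congrFun h (Fin.last k); simpa using this
  · rintro ⟨rfl, rfl⟩
    funext i
    refine Fin.lastCases ?_ ?_ i <;> simp

/-- if the unitary `V` on `n+ξ+1` qubits satisfies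
`V(|x⟩⊗|0^ξ⟩⊗|0⟩) = |x⟩⊗|0^ξ⟩⊗|f(x)⟩`, and
`W := (H^{⊗n} ⊗ I^{⊗ξ} ⊗ H) V (H^{⊗n} ⊗ I^{⊗(ξ+1)})`, then
`|⟨0^{n+ξ}1|W|0^{n+ξ+1}⟩|² = gap(f)² / 2^{2n+1}`. -/
theorem hadamard_count_gap_amplitude (n ξ : ℕ)
    (f : Qubits n → Bool)
    (V : Matrix (Qubits (n + ξ + 1)) (Qubits (n + ξ + 1)) ℂ)
    (hV : V ∈ Matrix.unitaryGroup (Qubits (n + ξ + 1)) ℂ)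
    (hact : ∀ x : Qubits n,
      V.mulVec (ket (Fin.snoc (Fin.append x fun _ : Fin ξ => false) false)) =
        ket (Fin.snoc (Fin.append x fun _ : Fin ξ => false) (f x))) :
    ‖(tmul (tmul (tpow Hmat n) (tpow 1 ξ)) (tpow Hmat 1) * V *
            recast (show n + (ξ + 1) = n + ξ + 1 by omega) (tmul (tpow Hmat n) (tpow 1 (ξ + 1))))
          (Fin.snoc (fun _ : Fin (n + ξ) => false) true) (fun _ => false)‖ ^ 2 =
      (gap f : ℝ) ^ 2 / 2 ^ (2 * n + 1) := by
  have h' : n + (ξ + 1) = n + ξ + 1 := by omega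
  set A := tmul (tmul (tpow Hmat n) (tpow 1 ξ)) (tpow Hmat 1) with hA_def
  set B := recast h' (tmul (tpow Hmat n) (tpow 1 (ξ + 1))) with hB_def
  set r : Qubits (n+ξ+1) := Fin.snoc (fun _ : Fin (n + ξ) => false) true with hr
  -- column lemma
  have hcol : ∀ (x : Qubits n) (y : Qubits (n+ξ+1)),
      V y (Fin.snoc (Fin.append x fun _ => false) false)
        = ket (Fin.snoc (Fin.append x fun _ => false) (f x)) y := by
    intro x y
    have := congrFun (hact x) y
    simpa [Matrix.mulVec, dotProduct, ket, mul_ite, mul_one, mul_zero,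
      Finset.sum_ite_eq'] using this
  -- A at the relevant entries
  have hA : ∀ x : Qubits n,
      A r (Fin.snoc (Fin.append x fun _ => false) (f x))
        = ((1 / Real.sqrt 2 : ℝ) : ℂ) ^ n *
            (((1 / Real.sqrt 2 : ℝ) : ℂ) * (if f x then -1 else 1)) := by
    intro x
    rw [hA_def]
    simp only [tmul, Matrix.of_apply]
    have e1 : ∀ j : Fin (n + ξ), Fin.castAdd 1 j = Fin.castSucc j := fun _ => rfl
    have e2 : ∀ i : Fin 1, Fin.natAdd (n + ξ) i = Fin.last (n + ξ) := by
      intro i; ext; simp [Fin.ext_iff]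
    simp only [e1, e2, hr, Fin.snoc_castSucc, Fin.snoc_last]
    have e3 : ∀ i : Fin n, Fin.append x (fun _ : Fin ξ => false) (Fin.castAdd ξ i) = x i :=
      fun i => Fin.append_left _ _ i
    have e4 : ∀ i : Fin ξ, Fin.append x (fun _ : Fin ξ => false) (Fin.natAdd n i) = false :=
      fun i => Fin.append_right _ _ i
    simp only [e3, e4]
    rw [tpow_one_eq, if_pos rfl, mul_one]
    cases hfx : f x <;>
      · simp [tpow, Hmat_col_false, Hmat_true, Finset.prod_const, hfx]
  -- B at the relevant entries
  have hB : ∀ (x : Qubits n) (q : Qubits ξ × Bool),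
      B (splitE n ξ (x, q)) (fun _ => false)
        = if q = ((fun _ => false), false) then ((1 / Real.sqrt 2 : ℝ) : ℂ) ^ n else 0 := by
    rintro x ⟨u, b⟩
    rw [hB_def]
    simp only [recast, Matrix.reindex_apply, Matrix.submatrix_apply, Equiv.arrowCongr_symm,
      Equiv.arrowCongr_apply, Equiv.refl_symm, Equiv.refl_apply, Function.comp,
      finCongr_symm, finCongr_apply, tmul, Matrix.of_apply]
    have e5 : ∀ i : Fin n, (splitE n ξ (x, u, b)) (Fin.cast h' (Fin.castAdd (ξ+1) i)) = x i := by
      intro i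
      have : Fin.cast h' (Fin.castAdd (ξ+1) i) = Fin.castSucc (Fin.castAdd ξ i) := by
        ext; simp
      rw [this]
      simp [splitE, Fin.snoc_castSucc, Fin.append_left]
    have e6 : (fun i : Fin (ξ+1) => (splitE n ξ (x, u, b)) (Fin.cast h' (Fin.natAdd n i)))
        = Fin.snoc u b := by
      funext i
      refine Fin.lastCases ?_ ?_ i
      · have : Fin.cast h' (Fin.natAdd n (Fin.last ξ)) = Fin.last (n + ξ) := by
          ext; simp [Fin.ext_iff]
        rw [this]; simp [splitE]
      · intro j
        have : Fin.cast h' (Fin.natAdd n (Fin.castSucc j)) = Fin.castSucc (Fin.natAdd n j) := by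
          ext; simp
        rw [this]; simp [splitE, Fin.snoc_castSucc, Fin.append_right, -Fin.castSucc_natAdd]
    simp only [e5, e6]
    rw [tpow_one_eq]
    by_cases hq : u = (fun _ => false) ∧ b = false
    · obtain ⟨rfl, rfl⟩ := hq
      rw [if_pos ((snoc_eq_zero_iff _ _).mpr ⟨rfl, rfl⟩), if_pos rfl, mul_one]
      simp [tpow, Hmat_row_false, Finset.prod_const]
    · rw [if_neg (fun h => hq ((snoc_eq_zero_iff _ _).mp h)), mul_zero,
        if_neg (fun h => hq (by cases h; exact ⟨rfl, rfl⟩))]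
  -- main computation
  have key : (A * V * B) r (fun _ => false)
      = ((1 / Real.sqrt 2 : ℝ) : ℂ) ^ (2 * n + 1) * ((gap f : ℤ) : ℂ) := by
    rw [Matrix.mul_apply]
    rw [← Equiv.sum_comp (splitE n ξ) (fun z => (A * V) r z * B z (fun _ => false))]
    rw [Fintype.sum_prod_type]
    have step1 : ∀ x : Qubits n,
        (∑ q : Qubits ξ × Bool,
            (A * V) r (splitE n ξ (x, q)) * B (splitE n ξ (x, q)) (fun _ => false))
          = (A * V) r (splitE n ξ (x, (fun _ => false), false))
              * ((1 / Real.sqrt 2 : ℝ) : ℂ) ^ n := by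
      intro x
      simp only [hB, mul_ite, mul_zero, Finset.sum_ite_eq', Finset.mem_univ, if_pos]
    rw [Finset.sum_congr rfl (fun x _ => step1 x)]
    have step2 : ∀ x : Qubits n,
        (A * V) r (splitE n ξ (x, (fun _ => false), false))
          = A r (Fin.snoc (Fin.append x fun _ => false) (f x)) := by
      intro x
      have hz : splitE n ξ (x, (fun _ => false), false)
          = Fin.snoc (Fin.append x fun _ => false) false := rfl
      rw [hz, Matrix.mul_apply]
      simp only [hcol, ket, mul_ite, mul_one, mul_zero, Finset.sum_ite_eq', Finset.mem_univ,
        if_pos]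
    simp only [step2, hA]
    rw [show (∑ x : Qubits n, ((1 / Real.sqrt 2 : ℝ) : ℂ) ^ n *
          (((1 / Real.sqrt 2 : ℝ) : ℂ) * (if f x then -1 else 1)) *
          ((1 / Real.sqrt 2 : ℝ) : ℂ) ^ n)
        = ∑ x : Qubits n, ((1 / Real.sqrt 2 : ℝ) : ℂ) ^ (2 * n + 1) *
            (if f x then -1 else 1) from
      Finset.sum_congr rfl (fun x _ => by ring)]
    rw [← Finset.mul_sum]
    congr 1
    simp [gap, apply_ite (Int.cast : ℤ → ℂ)]
  rw [key]
  -- final arithmetic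
  rw [norm_mul, norm_pow]
  rw [Complex.norm_real, Real.norm_eq_abs, Complex.norm_intCast]
  have h2 : |(1 / Real.sqrt 2 : ℝ)| = 1 / Real.sqrt 2 := by
    rw [abs_of_nonneg]; positivity
  rw [h2, mul_pow, ← pow_mul]
  rw [show (2*n+1)*2 = 2*(2*n+1) by ring, pow_mul]
  rw [div_pow, one_pow, Real.sq_sqrt (by norm_num : (2:ℝ) ≥ 0)]
  rw [sq_abs]
  simp only [one_div, inv_pow]
  ring
end
end

section
/- Let h ≥ 0, let p ∈ ℤ[x_1,…,x_h] be a polynomial of total degree at most 2, and let j ∈ {0,1,…,7}. Define g_j : {0,1}^h → {0,1} by g_j(x) = 1 if p(x) ≡ j (mod 8) and g_j(x) = 0 otherwise. Then there exists a polynomial p_j ∈ ℤ[x_1,…,x_h] of total degree at most 14 such that g_j(x) ≡ p_j(x) (mod 2) for every x ∈ {0,1}^h. -/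
open scoped BigOperators
open Finset

namespace Deg14Aux

/-- 0/1 indicator vector of a finset. -/
def chi {h : ℕ} (T : Finset (Fin h)) : Fin h → ℤ := fun i => if i ∈ T then 1 else 0

lemma sum_filter_superset {h : ℕ} (S U : Finset (Fin h)) (hU : U ⊆ S) :
    ∑ T ∈ S.powerset.filter (fun T => U ⊆ T), (-1 : ℤ) ^ T.card
      = if U = S then (-1 : ℤ) ^ S.card else 0 := by
  have key : ∑ T ∈ S.powerset.filter (fun T => U ⊆ T), (-1 : ℤ) ^ T.card
      = ∑ R ∈ (S \ U).powerset, (-1 : ℤ) ^ (U.card + R.card) := by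
    refine Finset.sum_nbij' (fun T => T \ U) (fun R => U ∪ R) ?_ ?_ ?_ ?_ ?_
    · intro T hT
      simp only [mem_filter, mem_powerset] at hT
      exact mem_powerset.2 (sdiff_subset_sdiff hT.1 le_rfl)
    · intro R hR
      simp only [mem_powerset] at hR
      refine mem_filter.2 ⟨mem_powerset.2 (union_subset hU (hR.trans sdiff_subset)), subset_union_left⟩
    · intro T hT
      simp only [mem_filter, mem_powerset] at hT
      exact union_sdiff_of_subset hT.2
    · intro R hR
      simp only [mem_powerset] at hR
      have hdisj : Disjoint U R := by
        refine Finset.disjoint_left.2 fun a haU haR => ?_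
        exact (Finset.mem_sdiff.1 (hR haR)).2 haU
      show (U ∪ R) \ U = R
      rw [Finset.union_sdiff_cancel_left hdisj]
    · intro T hT
      simp only [mem_filter, mem_powerset] at hT
      have hc := Finset.card_sdiff_add_card_eq_card hT.2
      show (-1 : ℤ) ^ T.card = (-1 : ℤ) ^ (U.card + (T \ U).card)
      congr 1
      omega
  rw [key]
  have : ∑ R ∈ (S \ U).powerset, (-1 : ℤ) ^ (U.card + R.card)
      = (-1 : ℤ) ^ U.card * ∑ R ∈ (S \ U).powerset, (-1 : ℤ) ^ R.card := by
    rw [Finset.mul_sum]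
    exact Finset.sum_congr rfl fun R _ => (pow_add _ _ _)
  rw [this, Finset.sum_powerset_neg_one_pow_card]
  by_cases hUS : U = S
  · subst hUS
    simp
  · have h1 : S \ U ≠ ∅ := by
      intro hc
      exact hUS (Finset.Subset.antisymm hU (Finset.sdiff_eq_empty_iff_subset.1 hc))
    rw [if_neg h1, if_neg hUS, mul_zero]

lemma prod_chi {h : ℕ} (S A : Finset (Fin h)) :
    (∏ i ∈ S, chi A i) = if S ⊆ A then 1 else 0 := by
  by_cases hSA : S ⊆ A
  · rw [if_pos hSA]
    exact Finset.prod_eq_one fun i hi => by simp [chi, hSA hi]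
  · rw [if_neg hSA]
    obtain ⟨i, hiS, hiA⟩ := Finset.not_subset.1 hSA
    exact Finset.prod_eq_zero hiS (by simp [chi, hiA])

lemma prod_chi_pow {h : ℕ} (T : Finset (Fin h)) (d : Fin h →₀ ℕ) :
    (∏ i ∈ d.support, chi T i ^ d i) = if d.support ⊆ T then 1 else 0 := by
  by_cases hs : d.support ⊆ T
  · rw [if_pos hs]
    exact Finset.prod_eq_one fun i hi => by simp [chi, hs hi]
  · rw [if_neg hs]
    obtain ⟨i, hiS, hiT⟩ := Finset.not_subset.1 hs
    refine Finset.prod_eq_zero hiS ?_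
    have hd : d i ≠ 0 := Finsupp.mem_support_iff.1 hiS
    simp [chi, hiT, zero_pow hd]

/-- alternating sums over the powerset of `S` kill evaluations of polynomials of
total degree `< S.card`. -/
lemma alt_sum_eval_eq_zero {h : ℕ} (S : Finset (Fin h)) (F : MvPolynomial (Fin h) ℤ)
    (hF : F.totalDegree < S.card) :
    ∑ T ∈ S.powerset, (-1 : ℤ) ^ T.card * MvPolynomial.eval (chi T) F = 0 := by
  have expand : ∀ T : Finset (Fin h), MvPolynomial.eval (chi T) F
      = ∑ d ∈ F.support, MvPolynomial.coeff d F * (if d.support ⊆ T then 1 else 0) := by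
    intro T
    rw [MvPolynomial.eval_eq]
    exact Finset.sum_congr rfl fun d _ => by rw [prod_chi_pow]
  calc ∑ T ∈ S.powerset, (-1 : ℤ) ^ T.card * MvPolynomial.eval (chi T) F
      = ∑ T ∈ S.powerset, ∑ d ∈ F.support,
          (-1 : ℤ) ^ T.card * (MvPolynomial.coeff d F * (if d.support ⊆ T then 1 else 0)) := by
        refine Finset.sum_congr rfl fun T _ => ?_
        rw [expand T, Finset.mul_sum]
    _ = ∑ d ∈ F.support, ∑ T ∈ S.powerset,
          (-1 : ℤ) ^ T.card * (MvPolynomial.coeff d F * (if d.support ⊆ T then 1 else 0)) :=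
        Finset.sum_comm
    _ = 0 := by
        refine Finset.sum_eq_zero fun d hd => ?_
        have hcoe : ∑ T ∈ S.powerset,
            (-1 : ℤ) ^ T.card * (MvPolynomial.coeff d F * (if d.support ⊆ T then 1 else 0))
            = MvPolynomial.coeff d F *
              ∑ T ∈ S.powerset.filter (fun T => d.support ⊆ T), (-1 : ℤ) ^ T.card := by
          rw [Finset.sum_filter, Finset.mul_sum]
          refine Finset.sum_congr rfl fun T _ => ?_
          by_cases hsub : d.support ⊆ T <;> simp [hsub, mul_comm]
        rw [hcoe]
        by_cases hdS : d.support ⊆ S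
        · rw [sum_filter_superset S d.support hdS]
          have hcard : d.support.card ≤ F.totalDegree := by
            have h1 : d.support.card ≤ d.sum fun _ e => e := by
              rw [Finsupp.sum]
              calc d.support.card = ∑ _i ∈ d.support, 1 := by simp
                _ ≤ ∑ i ∈ d.support, d i :=
                    Finset.sum_le_sum fun i hi => Nat.one_le_iff_ne_zero.2 (Finsupp.mem_support_iff.1 hi)
            exact h1.trans (MvPolynomial.le_totalDegree hd)
          have : d.support ≠ S := by
            intro hc
            rw [hc] at hcard
            omega
          rw [if_neg this, mul_zero]
        · have : S.powerset.filter (fun T => d.support ⊆ T) = ∅ := by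
            refine Finset.eq_empty_of_forall_notMem fun T hT => ?_
            simp only [mem_filter, mem_powerset] at hT
            exact hdS (hT.2.trans hT.1)
          rw [this, Finset.sum_empty, mul_zero]

/-- Möbius inversion on the boolean lattice. -/
lemma moebius_eval {h : ℕ} (A : Finset (Fin h)) (f : Finset (Fin h) → ℤ) :
    ∑ S ∈ A.powerset, ((-1 : ℤ) ^ S.card * ∑ T ∈ S.powerset, (-1 : ℤ) ^ T.card * f T)
      = f A := by
  calc ∑ S ∈ A.powerset, ((-1 : ℤ) ^ S.card * ∑ T ∈ S.powerset, (-1 : ℤ) ^ T.card * f T)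
      = ∑ S ∈ A.powerset, ∑ T ∈ A.powerset,
          (if T ⊆ S then (-1 : ℤ) ^ S.card * ((-1 : ℤ) ^ T.card * f T) else 0) := by
        refine Finset.sum_congr rfl fun S hS => ?_
        have hSA : S ⊆ A := Finset.mem_powerset.1 hS
        have hfil : A.powerset.filter (fun T => T ⊆ S) = S.powerset := by
          ext T
          simp only [mem_filter, mem_powerset]
          exact ⟨fun h => h.2, fun h => ⟨h.trans hSA, h⟩⟩
        rw [Finset.mul_sum, ← hfil, Finset.sum_filter]
    _ = ∑ T ∈ A.powerset, ∑ S ∈ A.powerset,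
          (if T ⊆ S then (-1 : ℤ) ^ S.card * ((-1 : ℤ) ^ T.card * f T) else 0) :=
        Finset.sum_comm
    _ = ∑ T ∈ A.powerset,
          (if T = A then (-1 : ℤ) ^ A.card else 0) * ((-1 : ℤ) ^ T.card * f T) := by
        refine Finset.sum_congr rfl fun T hT => ?_
        have hTA : T ⊆ A := Finset.mem_powerset.1 hT
        have : ∑ S ∈ A.powerset,
            (if T ⊆ S then (-1 : ℤ) ^ S.card * ((-1 : ℤ) ^ T.card * f T) else 0)
            = (∑ S ∈ A.powerset.filter (fun S => T ⊆ S), (-1 : ℤ) ^ S.card)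
              * ((-1 : ℤ) ^ T.card * f T) := by
          rw [Finset.sum_mul, Finset.sum_filter]
        rw [this, sum_filter_superset A T hTA]
    _ = f A := by
        rw [Finset.sum_eq_single_of_mem A (Finset.mem_powerset.2 (Finset.Subset.refl A))]
        · rw [if_pos rfl, ← mul_assoc, ← pow_add]
          have : Even (A.card + A.card) := ⟨A.card, rfl⟩
          rw [this.neg_one_pow, one_mul]
        · intro T hT hTA
          rw [if_neg hTA, zero_mul]

lemma zmod32_key : ∀ z : ZMod 32,
    (∏ i ∈ Finset.range 7, (z - 1 - (i : ZMod 32)))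
      = if (ZMod.castHom (by norm_num : (8:ℕ) ∣ 32) (ZMod 8) z = 0) then 16 else 0 := by
  decide

lemma key_mod (w : ℤ) :
    16 ∣ (∏ i ∈ Finset.range 7, (w - 1 - (i : ℤ))) ∧
    (if (8 : ℤ) ∣ w then (1 : ℤ) else 0)
      ≡ (∏ i ∈ Finset.range 7, (w - 1 - (i : ℤ))) / 16 [ZMOD 2] := by
  set P : ℤ := ∏ i ∈ Finset.range 7, (w - 1 - (i : ℤ)) with hP
  have hcast : ((P : ℤ) : ZMod 32)
      = ∏ i ∈ Finset.range 7, ((w : ZMod 32) - 1 - (i : ZMod 32)) := by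
    rw [hP]
    push_cast
    rfl
  rw [zmod32_key ((w : ZMod 32))] at hcast
  have hcham : (ZMod.castHom (by norm_num : (8:ℕ) ∣ 32) (ZMod 8)) ((w : ZMod 32)) = (w : ZMod 8) :=
    map_intCast _ w
  by_cases hw : (8 : ℤ) ∣ w
  · have h8 : ((w : ZMod 8)) = 0 := (ZMod.intCast_zmod_eq_zero_iff_dvd w 8).2 (by exact_mod_cast hw)
    rw [if_pos (by rw [hcham]; exact h8)] at hcast
    have h32 : (32 : ℤ) ∣ P - 16 := by
      have : ((P - 16 : ℤ) : ZMod 32) = 0 := by push_cast; rw [hcast]; norm_num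
      exact_mod_cast (ZMod.intCast_zmod_eq_zero_iff_dvd _ 32).1 this
    obtain ⟨k, hk⟩ := h32
    constructor
    · exact ⟨2 * k + 1, by linarith⟩
    · rw [if_pos hw]
      show (1 : ℤ) % 2 = (P / 16) % 2
      omega
  · have h8 : ((w : ZMod 8)) ≠ 0 := fun hc =>
      hw (by exact_mod_cast (ZMod.intCast_zmod_eq_zero_iff_dvd w 8).1 hc)
    rw [if_neg (by rw [hcham]; exact h8)] at hcast
    have h32 : (32 : ℤ) ∣ P :=
      (ZMod.intCast_zmod_eq_zero_iff_dvd _ 32).1 (by exact_mod_cast hcast)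
    obtain ⟨k, hk⟩ := h32
    constructor
    · exact ⟨2 * k, by linarith⟩
    · rw [if_neg hw]
      show (0 : ℤ) % 2 = (P / 16) % 2
      omega

end Deg14Aux

theorem exists_degree14_indicator_polynomial (h : ℕ)
    (p : MvPolynomial (Fin h) ℤ) (hp : p.totalDegree ≤ 2)
    (j : ℕ) (hj : j ≤ 7) :
    ∃ pj : MvPolynomial (Fin h) ℤ, pj.totalDegree ≤ 14 ∧
      ∀ x : Fin h → Bool,
        (if MvPolynomial.eval (fun i => if x i then (1 : ℤ) else 0) p ≡ (j : ℤ) [ZMOD 8]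
          then (1 : ℤ) else 0) ≡
          MvPolynomial.eval (fun i => if x i then (1 : ℤ) else 0) pj [ZMOD 2] := by
  classical
  open Deg14Aux in
  set Q : MvPolynomial (Fin h) ℤ :=
    ∏ i ∈ Finset.range 7, (p - MvPolynomial.C ((j : ℤ) + 1 + (i : ℤ))) with hQ
  have hQdeg : Q.totalDegree ≤ 14 := by
    have h1 : Q.totalDegree
        ≤ ∑ i ∈ Finset.range 7, (p - MvPolynomial.C ((j : ℤ) + 1 + (i : ℤ))).totalDegree :=
      MvPolynomial.totalDegree_finset_prod _ _
    have h2 : ∑ i ∈ Finset.range 7, (p - MvPolynomial.C ((j : ℤ) + 1 + (i : ℤ))).totalDegree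
        ≤ ∑ _i ∈ Finset.range 7, 2 := by
      refine Finset.sum_le_sum ?_
      intro i _
      exact (MvPolynomial.totalDegree_sub_C_le _ _).trans hp
    simpa using h1.trans h2
  have hQeval : ∀ v : Fin h → ℤ, MvPolynomial.eval v Q
      = ∏ i ∈ Finset.range 7, ((MvPolynomial.eval v p - (j : ℤ)) - 1 - (i : ℤ)) := by
    intro v
    rw [hQ, map_prod]
    exact Finset.prod_congr rfl fun i _ => by
      rw [map_sub, MvPolynomial.eval_C]; ring
  have hkey : ∀ v : Fin h → ℤ, 16 ∣ MvPolynomial.eval v Q ∧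
      (if (8 : ℤ) ∣ (MvPolynomial.eval v p - (j : ℤ)) then (1 : ℤ) else 0)
        ≡ MvPolynomial.eval v Q / 16 [ZMOD 2] := by
    intro v
    rw [hQeval v]
    exact Deg14Aux.key_mod _
  set qv : Finset (Fin h) → ℤ := fun T => MvPolynomial.eval (Deg14Aux.chi T) Q / 16 with hqv
  set c : Finset (Fin h) → ℤ :=
    fun S => (-1 : ℤ) ^ S.card * ∑ T ∈ S.powerset, (-1 : ℤ) ^ T.card * qv T with hc
  refine ⟨∑ S ∈ (Finset.univ : Finset (Fin h)).powerset,
      MvPolynomial.C (c S) * ∏ i ∈ S, MvPolynomial.X i, ?_, ?_⟩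
  · refine (MvPolynomial.totalDegree_finset_sum _ _).trans ?_
    refine Finset.sup_le fun S _ => ?_
    by_cases hcS : S.card ≤ 14
    · calc (MvPolynomial.C (c S) * ∏ i ∈ S, MvPolynomial.X i).totalDegree
          ≤ (MvPolynomial.C (c S)).totalDegree + (∏ i ∈ S, (MvPolynomial.X i : MvPolynomial (Fin h) ℤ)).totalDegree :=
            MvPolynomial.totalDegree_mul _ _
        _ ≤ 0 + S.card := by
            refine add_le_add (le_of_eq (MvPolynomial.totalDegree_C _)) ?_
            refine (MvPolynomial.totalDegree_finset_prod _ _).trans ?_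
            calc ∑ i ∈ S, (MvPolynomial.X i : MvPolynomial (Fin h) ℤ).totalDegree
                = ∑ _i ∈ S, 1 := Finset.sum_congr rfl fun i _ => MvPolynomial.totalDegree_X i
              _ ≤ S.card := by simp
        _ ≤ 14 := by omega
    · have hsum : ∑ T ∈ S.powerset, (-1 : ℤ) ^ T.card * qv T = 0 := by
        have h16 : (16 : ℤ) * ∑ T ∈ S.powerset, (-1 : ℤ) ^ T.card * qv T = 0 := by
          rw [Finset.mul_sum]
          have hterm : ∀ T ∈ S.powerset, (16 : ℤ) * ((-1 : ℤ) ^ T.card * qv T)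
              = (-1 : ℤ) ^ T.card * MvPolynomial.eval (Deg14Aux.chi T) Q := by
            intro T _
            rw [hqv]
            dsimp only
            rw [← mul_assoc, mul_comm ((16 : ℤ)), mul_assoc,
              Int.mul_ediv_cancel' (hkey (Deg14Aux.chi T)).1]
          rw [Finset.sum_congr rfl hterm]
          exact Deg14Aux.alt_sum_eval_eq_zero S Q (lt_of_le_of_lt hQdeg (by omega))
        have := mul_eq_zero.1 h16
        rcases this with h' | h'
        · norm_num at h'
        · exact h'
      have hzero : c S = 0 := by rw [hc]; dsimp only; rw [hsum, mul_zero]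
      rw [hzero]
      simp
  · intro x
    set A : Finset (Fin h) := Finset.univ.filter (fun i => x i) with hA
    have hchiA : Deg14Aux.chi A = fun i => if x i then (1 : ℤ) else 0 := by
      funext i
      simp [Deg14Aux.chi, hA]
    have heval : MvPolynomial.eval (Deg14Aux.chi A)
        (∑ S ∈ (Finset.univ : Finset (Fin h)).powerset,
          MvPolynomial.C (c S) * ∏ i ∈ S, MvPolynomial.X i) = qv A := by
      rw [map_sum]
      have hterm : ∀ S ∈ (Finset.univ : Finset (Fin h)).powerset,
          MvPolynomial.eval (Deg14Aux.chi A) (MvPolynomial.C (c S) * ∏ i ∈ S, MvPolynomial.X i)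
          = c S * (if S ⊆ A then 1 else 0) := by
        intro S _
        rw [map_mul, MvPolynomial.eval_C, map_prod]
        congr 1
        rw [← Deg14Aux.prod_chi S A]
        exact Finset.prod_congr rfl fun i _ => MvPolynomial.eval_X _
      rw [Finset.sum_congr rfl hterm]
      have hfil : (Finset.univ : Finset (Fin h)).powerset.filter (fun S => S ⊆ A) = A.powerset := by
        ext S
        simp [Finset.mem_powerset]
      calc ∑ S ∈ (Finset.univ : Finset (Fin h)).powerset, c S * (if S ⊆ A then 1 else 0)
          = ∑ S ∈ (Finset.univ : Finset (Fin h)).powerset, (if S ⊆ A then c S else 0) := by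
            refine Finset.sum_congr rfl fun S _ => ?_
            by_cases h' : S ⊆ A
            · simp [h']
            · simp [h']
        _ = ∑ S ∈ A.powerset, c S := by rw [← Finset.sum_filter, hfil]
        _ = qv A := by
            rw [hc]
            exact Deg14Aux.moebius_eval A qv
    rw [← hchiA, heval]
    have hind := (hkey (Deg14Aux.chi A)).2
    have hiff : (MvPolynomial.eval (Deg14Aux.chi A) p ≡ (j : ℤ) [ZMOD 8])
        ↔ (8 : ℤ) ∣ (MvPolynomial.eval (Deg14Aux.chi A) p - (j : ℤ)) := by
      rw [Int.modEq_iff_dvd]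
      exact dvd_sub_comm
    by_cases hcond : (8 : ℤ) ∣ (MvPolynomial.eval (Deg14Aux.chi A) p - (j : ℤ))
    · rw [if_pos (hiff.2 hcond)]
      rw [if_pos hcond] at hind
      exact hind
    · rw [if_neg (fun hc' => hcond (hiff.1 hc'))]
      rw [if_neg hcond] at hind
      exact hind
end

section
/- For every positive integer k there exists a polynomial r_k ∈ ℤ[X] of degree at most 2k−1 such that for every integer x: if x ≡ 0 (mod 2) then r_k(x) ≡ 0 (mod 2^k), and if x ≡ 1 (mod 2) then r_k(x) ≡ 1 (mod 2^k). -/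
/-- Beigel–Tarui modulus amplification: for every positive integer `k`
there is an integer polynomial `r_k` of degree at most `2k−1` such that for every
integer `x`, if `x ≡ 0 (mod 2)` then `r_k(x) ≡ 0 (mod 2^k)`, and if `x ≡ 1 (mod 2)`
then `r_k(x) ≡ 1 (mod 2^k)`. -/
theorem exists_modulus_amplifying_polynomial (k : ℕ) (hk : 1 ≤ k) :
    ∃ r : Polynomial ℤ, r.natDegree ≤ 2 * k - 1 ∧
      ∀ x : ℤ,
        (x ≡ 0 [ZMOD 2] → r.eval x ≡ 0 [ZMOD (2 ^ k : ℤ)]) ∧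
        (x ≡ 1 [ZMOD 2] → r.eval x ≡ 1 [ZMOD (2 ^ k : ℤ)]) := by
  classical
  -- Bezout identity for X^k and (1-X)^k
  have hX1 : IsCoprime (Polynomial.X : Polynomial ℤ) (1 - Polynomial.X) := ⟨1, 1, by ring⟩
  have hcop : IsCoprime (Polynomial.X ^ k) ((1 - Polynomial.X : Polynomial ℤ) ^ k) := hX1.pow
  obtain ⟨a, b, hab⟩ := hcop
  set m : Polynomial ℤ := (Polynomial.X - 1) ^ k with hm
  have hd1 : (Polynomial.X - 1 : Polynomial ℤ).natDegree = 1 := by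
    rw [← Polynomial.C_1]; exact Polynomial.natDegree_X_sub_C 1
  have hmon : m.Monic := (Polynomial.monic_X_sub_C 1).pow k
  set a' : Polynomial ℤ := a %ₘ m with ha'
  set q : Polynomial ℤ := a /ₘ m with hq
  have hdiv : a' + m * q = a := Polynomial.modByMonic_add_div a m
  -- sign bookkeeping
  set c : Polynomial ℤ := (-1) ^ k with hc
  have hcc : c * c = 1 := by
    rw [hc, ← pow_add, ← two_mul, pow_mul]; norm_num
  have hsign : (1 - Polynomial.X : Polynomial ℤ) ^ k = c * m := by
    rw [hc, hm, ← neg_pow, neg_sub]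
  set b' : Polynomial ℤ := b + c * q * Polynomial.X ^ k with hb'
  have key : a' * Polynomial.X ^ k + b' * (1 - Polynomial.X) ^ k = 1 := by
    calc a' * Polynomial.X ^ k + b' * (1 - Polynomial.X) ^ k
        = (a' + m * q * (c * c)) * Polynomial.X ^ k + b * (1 - Polynomial.X) ^ k := by
          rw [hsign]; ring
      _ = a * Polynomial.X ^ k + b * (1 - Polynomial.X) ^ k := by rw [hcc, mul_one, hdiv]
      _ = 1 := hab
  refine ⟨a' * Polynomial.X ^ k, ?_, ?_⟩
  · -- degree bound
    rcases eq_or_ne a' 0 with h0 | h0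
    · simp [h0]
    · have hlt : a'.natDegree < m.natDegree := by
        apply Polynomial.natDegree_modByMonic_lt a hmon
        intro h1
        have : m.natDegree = 0 := by rw [h1]; simp
        rw [hm, Polynomial.natDegree_pow, hd1, mul_one] at this
        omega
      have hmd : m.natDegree = k := by
        rw [hm, Polynomial.natDegree_pow, hd1, mul_one]
      calc (a' * Polynomial.X ^ k).natDegree
          ≤ a'.natDegree + (Polynomial.X ^ k : Polynomial ℤ).natDegree :=
            Polynomial.natDegree_mul_le
        _ ≤ (k - 1) + k := by
            rw [Polynomial.natDegree_X_pow]
            omega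
        _ ≤ 2 * k - 1 := by omega
  · intro x
    constructor
    · intro hx
      have h2 : (2 : ℤ) ∣ x := (Int.modEq_zero_iff_dvd).1 hx
      have : (2 : ℤ) ^ k ∣ (a' * Polynomial.X ^ k).eval x := by
        rw [Polynomial.eval_mul, Polynomial.eval_pow, Polynomial.eval_X]
        exact Dvd.dvd.mul_left (pow_dvd_pow_of_dvd h2 k) _
      exact (Int.modEq_zero_iff_dvd).2 this
    · intro hx
      have h2 : (2 : ℤ) ∣ 1 - x := Int.ModEq.dvd hx
      have hkey := congrArg (Polynomial.eval x) key
      simp only [Polynomial.eval_add, Polynomial.eval_mul, Polynomial.eval_pow,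
        Polynomial.eval_X, Polynomial.eval_one, Polynomial.eval_sub] at hkey
      have : (2 : ℤ) ^ k ∣ 1 - (a' * Polynomial.X ^ k).eval x := by
        rw [Polynomial.eval_mul, Polynomial.eval_pow, Polynomial.eval_X]
        have : 1 - Polynomial.eval x a' * x ^ k = Polynomial.eval x b' * (1 - x) ^ k := by
          linarith [hkey]
        rw [this]
        exact Dvd.dvd.mul_left (pow_dvd_pow_of_dvd h2 k) _
      exact (Int.modEq_iff_dvd).2 this
end
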